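/- arXiv:2008.13691 — 2 statements merged into one kernel-verified Lean document; each statement's English description precedes it below -/
import Mathlib

section
/- With the same block structure and invertibility assumptions (Φ₁₁ and Φ₁₁ − δS₁₁ invertible), the matrix #-inversion lemma holds: (Φ − δS)^# = Φ^# + Φ^# · δ · (I − S Φ^# δ)^# · S · Φ^#. -/
open Matrix

/-- The #-inverse of a block matrix: the leading block is inverted and all other
blocks are set to zero. -/
noncomputable def sharpInv {n : ℕ} (M : Matrix (Fin n ⊕ Unit) (Fin n ⊕ Unit) ℂ) :
    Matrix (Fin n ⊕ Unit) (Fin n ⊕ Unit) ℂ :=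
  Matrix.fromBlocks (M.toBlocks₁₁)⁻¹ 0 0 0

lemma key_inv {n : ℕ} (A B : Matrix (Fin n) (Fin n) ℂ) (δ : ℂ)
    (hA : IsUnit A.det) (hAB : IsUnit (A - δ • B).det) :
    (A - δ • B)⁻¹ = A⁻¹ + δ • (A⁻¹ * (1 - δ • (B * A⁻¹))⁻¹ * B * A⁻¹) := by
  have h1 : 1 - δ • (B * A⁻¹) = (A - δ • B) * A⁻¹ := by
    rw [sub_mul, Matrix.mul_nonsing_inv A hA, Matrix.smul_mul]
  have h2 : (1 - δ • (B * A⁻¹))⁻¹ = A * (A - δ • B)⁻¹ := by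
    rw [h1, Matrix.mul_inv_rev, Matrix.nonsing_inv_nonsing_inv A hA]
  rw [h2]
  refine Matrix.inv_eq_right_inv ?_
  rw [mul_add]
  have hA1 : A⁻¹ * (A * (A - δ • B)⁻¹) = (A - δ • B)⁻¹ := by
    rw [← Matrix.mul_assoc, Matrix.nonsing_inv_mul A hA, Matrix.one_mul]
  calc (A - δ • B) * A⁻¹ + (A - δ • B) * (δ • (A⁻¹ * (A * (A - δ • B)⁻¹) * B * A⁻¹))
      = (A - δ • B) * A⁻¹ + δ • ((A - δ • B) * (A - δ • B)⁻¹ * B * A⁻¹) := by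
        rw [hA1, Matrix.mul_smul, Matrix.mul_assoc (A - δ • B), Matrix.mul_assoc (A - δ • B),
          ← Matrix.mul_assoc (A - δ • B), ← Matrix.mul_assoc (A - δ • B)]
    _ = 1 := by
        rw [Matrix.mul_nonsing_inv _ hAB, Matrix.one_mul, sub_mul,
          Matrix.mul_nonsing_inv A hA, Matrix.smul_mul]
        abel

/-- Matrix #-inversion lemma: (Φ − δS)^# = Φ^# + Φ^# δ (I − S Φ^# δ)^# S Φ^#. -/
theorem sharp_matrix_inversion_lemma {n : ℕ} (Φ11 S11 : Matrix (Fin n) (Fin n) ℂ)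
    (Φ12 S12 : Matrix (Fin n) Unit ℂ) (δ : ℂ)
    (hΦ : IsUnit Φ11.det) (hΦS : IsUnit (Φ11 - δ • S11).det) :
    sharpInv (Matrix.fromBlocks Φ11 Φ12 0 0 - δ • Matrix.fromBlocks S11 S12 0 0) =
      sharpInv (Matrix.fromBlocks Φ11 Φ12 0 0) +
        δ • (sharpInv (Matrix.fromBlocks Φ11 Φ12 0 0) *
          sharpInv (1 - δ • (Matrix.fromBlocks S11 S12 0 0 *
            sharpInv (Matrix.fromBlocks Φ11 Φ12 0 0))) *
          Matrix.fromBlocks S11 S12 0 0 *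
          sharpInv (Matrix.fromBlocks Φ11 Φ12 0 0)) := by
  have e1 : Matrix.fromBlocks Φ11 Φ12 0 0 - δ • Matrix.fromBlocks S11 S12 0 0 =
      Matrix.fromBlocks (Φ11 - δ • S11) (Φ12 - δ • S12) (0 : Matrix Unit (Fin n) ℂ) (0 : Matrix Unit Unit ℂ) := by
    ext (i|i) (j|j) <;> simp [Matrix.fromBlocks]
  have e2 : (1 : Matrix (Fin n ⊕ Unit) (Fin n ⊕ Unit) ℂ) -
      δ • (Matrix.fromBlocks S11 S12 0 0 * sharpInv (Matrix.fromBlocks Φ11 Φ12 0 0)) =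
      Matrix.fromBlocks (1 - δ • (S11 * Φ11⁻¹)) (0 : Matrix (Fin n) Unit ℂ) (0 : Matrix Unit (Fin n) ℂ) 1 := by
    simp only [sharpInv, Matrix.toBlocks_fromBlocks₁₁, Matrix.fromBlocks_multiply,
      Matrix.mul_zero, Matrix.zero_mul, add_zero, zero_add]
    ext (i|i) (j|j) <;> simp [Matrix.fromBlocks, Matrix.one_apply]
  rw [e1, e2]
  simp only [sharpInv, Matrix.toBlocks_fromBlocks₁₁]
  rw [key_inv Φ11 S11 δ hΦ hΦS]
  ext (i|i) (j|j) <;>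
    simp [Matrix.fromBlocks_multiply, Matrix.fromBlocks, Matrix.mul_apply]
end

section
/- Let α, Δ, γ be real with α ≠ 0, and consider the 4×4 Hamiltonian H = [[0, α, α, 0],[α, −Δ, 0, α],[α, 0, Δ, α],[0, α, α, 0]] (the two-qubit cavity Hamiltonian with symmetric driving α₁ = α₂ = α and antisymmetric detuning Δ₁ = −Δ₂ = −Δ, so Δ₁ + Δ₂ = 0) and the jump operator V = γ(σ₋⊗I + I⊗σ₋). Then the normalized vector ψ = (Δ² + 2α²)^{−1/2}(Δ, α, −α, 0)ᵀ satisfies Hψ = 0 and Vψ = 0; consequently ρ_ss = ψψ† is a steady state of the Lindblad equation dρ/dt = −i[H,ρ] + VρV† − ½(V†Vρ + ρV†V). -/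
open Matrix

lemma my_mul_vecMulVec {n : ℕ} (A : Matrix (Fin n) (Fin n) ℂ) (w v : Fin n → ℂ) :
    A * Matrix.vecMulVec w v = Matrix.vecMulVec (A.mulVec w) v := by
  ext i j
  simp [Matrix.mul_apply, Matrix.vecMulVec_apply, Matrix.mulVec, dotProduct,
    Finset.sum_mul, mul_assoc]

lemma my_vecMulVec_mul {n : ℕ} (A : Matrix (Fin n) (Fin n) ℂ) (w v : Fin n → ℂ) :
    Matrix.vecMulVec w v * A = Matrix.vecMulVec w (Matrix.vecMul v A) := by
  ext i j
  simp [Matrix.mul_apply, Matrix.vecMulVec_apply, Matrix.vecMul, dotProduct,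
    Finset.mul_sum, mul_assoc]

/-- The singlet-like state ψ = (Δ² + 2α²)^{-1/2}(Δ, α, −α, 0)ᵀ is annihilated by the
two-qubit cavity Hamiltonian and by the collective jump operator, hence ψψ† is a
steady state of the Lindblad equation. -/
theorem two_qubit_cavity_steady_state (α Δ γ : ℝ) (hα : α ≠ 0)
    (H V : Matrix (Fin 4) (Fin 4) ℂ)
    (hH : H = !![0, (α : ℂ), (α : ℂ), 0;
                 (α : ℂ), (-Δ : ℂ), 0, (α : ℂ);
                 (α : ℂ), 0, (Δ : ℂ), (α : ℂ);
                 0, (α : ℂ), (α : ℂ), 0])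
    (hV : V = (γ : ℂ) • !![0, 1, 1, 0;
                           0, 0, 0, 1;
                           0, 0, 0, 1;
                           0, 0, 0, 0])
    (ψ : Fin 4 → ℂ)
    (hψ : ψ = ((Real.sqrt (Δ ^ 2 + 2 * α ^ 2) : ℂ))⁻¹ •
      ![(Δ : ℂ), (α : ℂ), (-α : ℂ), 0]) :
    H.mulVec ψ = 0 ∧ V.mulVec ψ = 0 ∧
    (-Complex.I • (H * Matrix.vecMulVec ψ (star ψ) - Matrix.vecMulVec ψ (star ψ) * H) +
      (V * Matrix.vecMulVec ψ (star ψ) * Vᴴ -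
        (1 / 2 : ℂ) • (Vᴴ * V * Matrix.vecMulVec ψ (star ψ) +
          Matrix.vecMulVec ψ (star ψ) * (Vᴴ * V)))) = 0 := by
  have hHψ : H.mulVec ψ = 0 := by
    subst hH hψ
    ext i
    fin_cases i <;>
      simp [Matrix.mulVec, dotProduct, Fin.sum_univ_four] <;> ring
  have hVψ : V.mulVec ψ = 0 := by
    subst hV hψ
    ext i
    fin_cases i <;>
      simp [Matrix.mulVec, dotProduct, Fin.sum_univ_four] <;> ring
  have hψH : Matrix.vecMul (star ψ) H = 0 := by
    subst hH hψ
    ext j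
    fin_cases j <;>
      simp [Matrix.vecMul, dotProduct, Fin.sum_univ_four] <;> ring
  have hψVH : Matrix.vecMul (star ψ) Vᴴ = 0 := by
    rw [← Matrix.star_mulVec, hVψ]
    simp
  have hz1 : Matrix.vecMulVec (0 : Fin 4 → ℂ) (star ψ) = 0 := by
    ext i j; simp [Matrix.vecMulVec_apply]
  have hz2 : Matrix.vecMulVec ψ (0 : Fin 4 → ℂ) = 0 := by
    ext i j; simp [Matrix.vecMulVec_apply]
  have e1 : H * Matrix.vecMulVec ψ (star ψ) = 0 := by
    rw [my_mul_vecMulVec, hHψ, hz1]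
  have e2 : Matrix.vecMulVec ψ (star ψ) * H = 0 := by
    rw [my_vecMulVec_mul, hψH, hz2]
  have e3 : V * Matrix.vecMulVec ψ (star ψ) * Vᴴ = 0 := by
    rw [my_mul_vecMulVec, hVψ, hz1, zero_mul]
  have e4 : Vᴴ * V * Matrix.vecMulVec ψ (star ψ) = 0 := by
    rw [mul_assoc, my_mul_vecMulVec, hVψ, hz1, mul_zero]
  have e5 : Matrix.vecMulVec ψ (star ψ) * (Vᴴ * V) = 0 := by
    rw [← mul_assoc, my_vecMulVec_mul, hψVH, hz2, zero_mul]
  refine ⟨hHψ, hVψ, ?_⟩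
  rw [e1, e2, e3, e4, e5]
  simp
end
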